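/- Let f₁ and f₂ be real functions differentiable on a finite open interval (a,b), and let g(x) = max{f₁(x), f₂(x)}. Then at every point x ∈ (a,b) both one-sided derivatives D⁺g(x) and D⁻g(x) exist, and each of them coincides with either f₁′(x) or f₂′(x). -/

import Mathlib

/-!
Where `f₁ x ≠ f₂ x`, continuity makes `max f₁ f₂` coincide with the larger function near `x`.
Where `f₁ x = f₂ x`, the difference quotients of `max f₁ f₂` at `x` are the maxima of those of
`f₁` and `f₂` to the right of `x`, and (dividing by a negative number) their minima to the left;
so the right derivative is `max f₁' f₂'` and the left one is `min f₁' f₂'`.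
-/

open Set Filter Topology

variable {f₁ f₂ : ℝ → ℝ} {d₁ d₂ x : ℝ}

theorem HasDerivWithinAt.max_of_lt {s : Set ℝ} (hx : f₂ x < f₁ x)
    (h₁ : HasDerivWithinAt f₁ d₁ s x) (h₂ : ContinuousWithinAt f₂ s x) :
    HasDerivWithinAt (fun y => max (f₁ y) (f₂ y)) d₁ s x := by
  have hlt : ∀ᶠ y in 𝓝[s] x, f₂ y < f₁ y := h₂.eventually_lt h₁.continuousWithinAt hx
  exact h₁.congr_of_eventuallyEq (hlt.mono fun y hy => max_eq_left hy.le) (max_eq_left hx.le)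

theorem HasDerivWithinAt.max_Ici_of_eq (hx : f₁ x = f₂ x)
    (h₁ : HasDerivWithinAt f₁ d₁ (Ici x) x) (h₂ : HasDerivWithinAt f₂ d₂ (Ici x) x) :
    HasDerivWithinAt (fun y => max (f₁ y) (f₂ y)) (max d₁ d₂) (Ici x) x := by
  rw [hasDerivWithinAt_iff_tendsto_slope, Ici_sdiff_left] at *
  refine (h₁.max h₂).congr' ?_
  filter_upwards [self_mem_nhdsWithin] with y (hy : x < y)
  simp only [slope_def_field]
  rw [← hx, max_div_div_right (sub_nonneg.2 hy.le), max_sub_sub_right, max_self]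

theorem HasDerivWithinAt.max_Iic_of_eq (hx : f₁ x = f₂ x)
    (h₁ : HasDerivWithinAt f₁ d₁ (Iic x) x) (h₂ : HasDerivWithinAt f₂ d₂ (Iic x) x) :
    HasDerivWithinAt (fun y => max (f₁ y) (f₂ y)) (min d₁ d₂) (Iic x) x := by
  rw [hasDerivWithinAt_iff_tendsto_slope, Iic_sdiff_right] at *
  refine (h₁.min h₂).congr' ?_
  filter_upwards [self_mem_nhdsWithin] with y (hy : y < x)
  simp only [slope_def_field]
  rw [← hx, min_div_div_right_of_nonpos (sub_nonpos.2 hy.le), max_sub_sub_right, max_self]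

theorem exists_hasDerivWithinAt_max_of_ne {s : Set ℝ} (hx : f₁ x ≠ f₂ x)
    (h₁ : HasDerivWithinAt f₁ d₁ s x) (h₂ : HasDerivWithinAt f₂ d₂ s x) :
    ∃ d, HasDerivWithinAt (fun y => max (f₁ y) (f₂ y)) d s x ∧ (d = d₁ ∨ d = d₂) := by
  rcases hx.lt_or_gt with hlt | hgt
  · refine ⟨d₂, ?_, Or.inr rfl⟩
    simpa only [max_comm] using h₂.max_of_lt hlt h₁.continuousWithinAt
  · exact ⟨d₁, h₁.max_of_lt hgt h₂.continuousWithinAt, Or.inl rfl⟩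

theorem exists_hasDerivWithinAt_max_Ici
    (h₁ : HasDerivWithinAt f₁ d₁ (Ici x) x) (h₂ : HasDerivWithinAt f₂ d₂ (Ici x) x) :
    ∃ d, HasDerivWithinAt (fun y => max (f₁ y) (f₂ y)) d (Ici x) x ∧ (d = d₁ ∨ d = d₂) := by
  by_cases hx : f₁ x = f₂ x
  · exact ⟨_, h₁.max_Ici_of_eq hx h₂, max_choice d₁ d₂⟩
  · exact exists_hasDerivWithinAt_max_of_ne hx h₁ h₂

theorem exists_hasDerivWithinAt_max_Iic
    (h₁ : HasDerivWithinAt f₁ d₁ (Iic x) x) (h₂ : HasDerivWithinAt f₂ d₂ (Iic x) x) :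
    ∃ d, HasDerivWithinAt (fun y => max (f₁ y) (f₂ y)) d (Iic x) x ∧ (d = d₁ ∨ d = d₂) := by
  by_cases hx : f₁ x = f₂ x
  · exact ⟨_, h₁.max_Iic_of_eq hx h₂, min_choice d₁ d₂⟩
  · exact exists_hasDerivWithinAt_max_of_ne hx h₁ h₂

theorem oneSided_deriv_of_max (a b : ℝ)
    (f₁ f₂ f₁' f₂' : ℝ → ℝ)
    (h₁ : ∀ x ∈ Set.Ioo a b, HasDerivAt f₁ (f₁' x) x)
    (h₂ : ∀ x ∈ Set.Ioo a b, HasDerivAt f₂ (f₂' x) x)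
    (g : ℝ → ℝ) (hg : ∀ x, g x = max (f₁ x) (f₂ x)) :
    ∀ x ∈ Set.Ioo a b,
      (∃ d : ℝ, HasDerivWithinAt g d (Set.Ici x) x ∧ (d = f₁' x ∨ d = f₂' x)) ∧
      (∃ d : ℝ, HasDerivWithinAt g d (Set.Iic x) x ∧ (d = f₁' x ∨ d = f₂' x)) := by
  intro x hx
  rw [funext hg]
  exact ⟨exists_hasDerivWithinAt_max_Ici (h₁ x hx).hasDerivWithinAt (h₂ x hx).hasDerivWithinAt,
    exists_hasDerivWithinAt_max_Iic (h₁ x hx).hasDerivWithinAt (h₂ x hx).hasDerivWithinAt⟩
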